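/- arXiv:2503.11817 — 3 statements merged into one kernel-verified Lean document; each statement's English description precedes it below -/
import Mathlib

section
/- For all r ≥ 0 and γ ∈ ℚ, the operator (x - γ·∂ₓ)ʳ applied to the constant polynomial 1 in ℚ[x] equals ∑_{l≥0} C(r, 2l) · (-γ)ˡ · (2l)! / (2ˡ · l!) · x^{r-2l} (Rodrigues-type formula for generalized Hermite polynomials). -/
open Polynomial

namespace Stmt3Aux

open Finset

private def a (γ : ℚ) (r l : ℕ) : ℚ :=
  (r.choose (2 * l) : ℚ) * (-γ) ^ l * (2 * l).factorial / (2 ^ l * l.factorial)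

private lemma a_top (γ : ℚ) {r l : ℕ} (h : r < 2 * l) : a γ r l = 0 := by
  simp [a, Nat.choose_eq_zero_of_lt h]

private lemma a_rec (γ : ℚ) (r l : ℕ) (h : 2 * l ≤ r) :
    a γ (r + 1) (l + 1) = a γ r (l + 1) - γ * ((r : ℚ) - 2 * l) * a γ r l := by
  have hc : (r.choose (2 * l + 1) : ℚ) * (2 * l + 1) =
      (r.choose (2 * l) : ℚ) * ((r : ℚ) - 2 * l) := by
    have h1 := Nat.choose_succ_right_eq r (2 * l)
    have h2 : ((r - 2 * l : ℕ) : ℚ) = (r : ℚ) - 2 * l := by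
      rw [Nat.cast_sub h]; push_cast; ring
    rw [← h2]; exact_mod_cast h1
  have hsplit : ((r + 1).choose (2 * (l + 1)) : ℚ)
      = r.choose (2 * l + 1) + r.choose (2 * l + 2) := by
    have e : 2 * (l + 1) = (2 * l + 1) + 1 := by ring
    rw [e, Nat.choose_succ_succ]
    push_cast; ring
  simp only [a]
  rw [hsplit]
  have e1 : 2 * (l + 1) = 2 * l + 1 + 1 := by ring
  rw [e1]
  simp only [Nat.factorial_succ, pow_succ]
  push_cast
  have hl : (l.factorial : ℚ) ≠ 0 := by positivity
  have h2 : (2:ℚ) ^ l ≠ 0 := by positivity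
  field_simp
  linear_combination (-(γ * (-γ) ^ l * (2 * (l:ℚ) + 2))) * hc

private lemma main_lemma (γ : ℚ) (n : ℕ) :
    (fun P : Polynomial ℚ => X * P - γ • derivative P)^[n] 1 =
      ∑ l ∈ Finset.range (n / 2 + 1), C (a γ n l) * X ^ (n - 2 * l) := by
  induction n with
  | zero => simp [a]
  | succ r ih =>
    rw [Function.iterate_succ_apply', ih]
    -- derivative part
    have hD : γ • derivative (∑ l ∈ range (r / 2 + 1), C (a γ r l) * X ^ (r - 2 * l))
        = ∑ l ∈ range (r / 2 + 1),
            C (γ * ((r : ℚ) - 2 * l) * a γ r l) * X ^ (r - 2 * l - 1) := by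
      rw [derivative_sum, smul_sum]
      refine sum_congr rfl fun l hl => ?_
      have h2 : 2 * l ≤ r := by have := mem_range.mp hl; omega
      have hcast : ((r - 2 * l : ℕ) : ℚ) = (r : ℚ) - 2 * l := by
        rw [Nat.cast_sub h2]; push_cast; ring
      rw [derivative_C_mul, derivative_X_pow, smul_eq_C_mul, hcast, map_mul, map_mul]
      ring
    have hX : X * (∑ l ∈ range (r / 2 + 1), C (a γ r l) * X ^ (r - 2 * l))
        = ∑ l ∈ range (r / 2 + 1), C (a γ r l) * X ^ (r + 1 - 2 * l) := by
      rw [Finset.mul_sum]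
      refine sum_congr rfl fun l hl => ?_
      have h2 : 2 * l ≤ r := by have := mem_range.mp hl; omega
      rw [show r + 1 - 2 * l = (r - 2 * l) + 1 by omega, pow_succ]
      ring
    rw [hD, hX]
    -- expand the target range
    have hR : (∑ l ∈ range ((r + 1) / 2 + 1), C (a γ (r + 1) l) * X ^ (r + 1 - 2 * l))
        = ∑ l ∈ range (r / 2 + 2), C (a γ (r + 1) l) * X ^ (r + 1 - 2 * l) := by
      refine Finset.sum_subset ?_ ?_
      · intro x hx; simp only [mem_range] at *; omega
      · intro x hx hnx
        have : r + 1 < 2 * x := by simp only [mem_range] at *; omega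
        rw [a_top γ this]; simp
    rw [hR]
    conv_rhs => rw [Finset.sum_range_succ']
    have hterm : ∀ l ∈ range (r / 2 + 1),
        C (a γ (r + 1) (l + 1)) * X ^ (r + 1 - 2 * (l + 1))
          = C (a γ r (l + 1)) * X ^ (r - 2 * l - 1)
            - C (γ * ((r : ℚ) - 2 * l) * a γ r l) * X ^ (r - 2 * l - 1) := by
      intro l hl
      have h2 : 2 * l ≤ r := by have := mem_range.mp hl; omega
      rw [a_rec γ r l h2, show r + 1 - 2 * (l + 1) = r - 2 * l - 1 by omega, map_sub]
      ring
    conv_rhs => rw [Finset.sum_congr rfl hterm, Finset.sum_sub_distrib]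
    -- now match X-part
    have hXpart : (∑ l ∈ range (r / 2 + 1), C (a γ r l) * X ^ (r + 1 - 2 * l))
        = (∑ l ∈ range (r / 2 + 1), C (a γ r (l + 1)) * X ^ (r - 2 * l - 1))
          + C (a γ (r + 1) 0) * X ^ (r + 1 - 2 * 0) := by
      rw [Finset.sum_range_succ'] -- LHS = ∑_{l<r/2} f(l+1) + f 0
      rw [Finset.sum_range_succ]  -- RHS sum = ∑_{l<r/2} + top
      have htop : a γ r (r / 2 + 1) = 0 := a_top γ (by omega)
      rw [htop]
      have h0 : a γ (r + 1) 0 = a γ r 0 := by simp [a]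
      rw [h0]
      have : ∀ l ∈ range (r / 2), C (a γ r (l + 1)) * X ^ (r + 1 - 2 * (l + 1))
          = C (a γ r (l + 1)) * X ^ (r - 2 * l - 1) := by
        intro l hl
        rw [show r + 1 - 2 * (l + 1) = r - 2 * l - 1 by omega]
      rw [Finset.sum_congr rfl this]
      simp
    rw [hXpart]
    ring

end Stmt3Aux

/-- Rodrigues-type formula for generalized Hermite polynomials:
`(x - γ∂ₓ)ʳ · 1 = ∑_{l} C(r,2l)·(-γ)ˡ·(2l)!/(2ˡ·l!)·x^{r-2l}` in `ℚ[x]`. -/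
theorem stmt3 (r : ℕ) (γ : ℚ) :
    (fun P : Polynomial ℚ => X * P - γ • derivative P)^[r] 1 =
      ∑ l ∈ Finset.range (r / 2 + 1),
        C ((r.choose (2 * l) : ℚ) * (-γ) ^ l * (2 * l).factorial / (2 ^ l * l.factorial))
          * X ^ (r - 2 * l) := by
  have h := Stmt3Aux.main_lemma γ r
  simpa [Stmt3Aux.a] using h
end

section
/- For integers r, s ≥ 0, with α_r = ((−1)^r / (2^r (2r−1)!!))·X^{2r}·1 and β_s = (2^s / (2s−1)!!)·Y^{2s}·1 where X and Y are the operators X = x₂ + x₁ − (1/120)∂₂ + (1/120)∂₃ and Y = x₃ + (3/2)x₂ + (1/2)x₁ + (1/240)∂₁ − (1/240)∂₂ + (1/315)∂₃ on ℚ[x₁,x₂,x₃], the 2-adic valuation of the polynomial α_r·β_s (minimum of valuations of its coefficients) equals −4r − 3s for r, s ≥ 2. -/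
open MvPolynomial Nat

/-- The operator `X = x₂ + x₁ - (1/120)∂₂ + (1/120)∂₃` on `ℚ[x₁,x₂,x₃]`
(variable `X i` plays the role of `x_{i+1}`). -/
noncomputable def opX (P : MvPolynomial (Fin 3) ℚ) : MvPolynomial (Fin 3) ℚ :=
  X 1 * P + X 0 * P - ((1 : ℚ)/120) • pderiv 1 P + ((1 : ℚ)/120) • pderiv 2 P

/-- The operator `Y = x₃ + (3/2)x₂ + (1/2)x₁ + (1/240)∂₁ - (1/240)∂₂ + (1/315)∂₃`. -/
noncomputable def opY (P : MvPolynomial (Fin 3) ℚ) : MvPolynomial (Fin 3) ℚ :=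
  X 2 * P + ((3 : ℚ)/2) • (X 1 * P) + ((1 : ℚ)/2) • (X 0 * P)
    + ((1 : ℚ)/240) • pderiv 0 P - ((1 : ℚ)/240) • pderiv 1 P + ((1 : ℚ)/315) • pderiv 2 P

abbrev R3 := MvPolynomial (Fin 3) ℚ

noncomputable def vX : R3 := X 1 + X 0
noncomputable def DXd : Derivation ℚ R3 R3 :=
  ((1:ℚ)/120) • (pderiv 2) - ((1:ℚ)/120) • (pderiv 1)
noncomputable def vY : R3 := X 2 + C ((3:ℚ)/2) * X 1 + C ((1:ℚ)/2) * X 0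
noncomputable def EYd : Derivation ℚ R3 R3 :=
  ((1:ℚ)/240) • (pderiv 0) - ((1:ℚ)/240) • (pderiv 1) + ((1:ℚ)/315) • (pderiv 2)

lemma opX_eq (P : R3) : opX P = vX * P + DXd P := by
  simp [opX, vX, DXd]
  ring

lemma opX_one : opX 1 = vX := by
  rw [opX_eq, DXd.map_one_eq_zero, mul_one, add_zero]

lemma DX_vX : DXd vX = C (-1/120 : ℚ) := by
  simp [DXd, vX, smul_eq_C_mul]
  rw [← C_neg]; norm_num

lemma DX_iter : ∀ n : ℕ, DXd (opX^[n+1] 1) = (((n:ℚ)+1) * (-1/120)) • opX^[n] 1 := by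
  intro n
  induction n with
  | zero =>
    simp [opX_one, DX_vX, smul_eq_C_mul]
  | succ n ih =>
    rw [Function.iterate_succ_apply' opX (n+1), opX_eq, map_add, Derivation.leibniz, DX_vX, ih,
      Derivation.map_smul]
    rw [Function.iterate_succ_apply' opX n, opX_eq]
    push_cast
    simp only [smul_eq_mul]
    rw [mul_comm _ (C (-1/120:ℚ)), C_mul']
    simp only [smul_add, mul_smul_comm, smul_smul]
    module

lemma H_rec (n : ℕ) : opX^[n+2] 1 =
    vX * opX^[n+1] 1 + (((n:ℚ)+1) * (-1/120)) • opX^[n] 1 := by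
  rw [Function.iterate_succ_apply' opX (n+1), opX_eq, DX_iter]

lemma EY_vY : EYd vY = C (-1/1008 : ℚ) := by
  simp [EYd, vY, pderiv_C_mul, smul_eq_C_mul]
  rw [← C_mul, ← C_mul, ← C_sub, ← C_add]
  norm_num

lemma opY_eq (P : R3) : opY P = vY * P + EYd P := by
  simp [opY, vY, EYd, smul_eq_C_mul]
  ring

lemma opY_one : opY 1 = vY := by
  rw [opY_eq, EYd.map_one_eq_zero, mul_one, add_zero]

lemma EY_iter : ∀ n : ℕ, EYd (opY^[n+1] 1) = (((n:ℚ)+1) * (-1/1008)) • opY^[n] 1 := by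
  intro n
  induction n with
  | zero =>
    simp [opY_one, EY_vY, smul_eq_C_mul]
  | succ n ih =>
    rw [Function.iterate_succ_apply' opY (n+1), opY_eq, map_add, Derivation.leibniz, EY_vY, ih,
      Derivation.map_smul]
    rw [Function.iterate_succ_apply' opY n, opY_eq]
    push_cast
    simp only [smul_eq_mul]
    rw [mul_comm _ (C (-1/1008:ℚ)), C_mul']
    simp only [smul_add, mul_smul_comm, smul_smul]
    module

lemma K_rec (n : ℕ) : opY^[n+2] 1 =
    vY * opY^[n+1] 1 + (((n:ℚ)+1) * (-1/1008)) • opY^[n] 1 := by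
  rw [Function.iterate_succ_apply' opY (n+1), opY_eq, EY_iter]

lemma val_add_ge {B c : ℤ} (hc : 0 ≤ c) {x y : ℚ}
    (hx : x ≠ 0 → B ≤ c * padicValRat 2 x) (hy : y ≠ 0 → B ≤ c * padicValRat 2 y)
    (h : x + y ≠ 0) : B ≤ c * padicValRat 2 (x + y) := by
  by_cases h1 : x = 0
  · simpa [h1] using hy (by simpa [h1] using h)
  by_cases h2 : y = 0
  · simpa [h2] using hx (by simpa [h2] using h)
  have hmin := padicValRat.min_le_padicValRat_add (p := 2) h
  have : B ≤ c * min (padicValRat 2 x) (padicValRat 2 y) := by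
    rcases le_total (padicValRat 2 x) (padicValRat 2 y) with hle | hle
    · rw [min_eq_left hle]; exact hx h1
    · rw [min_eq_right hle]; exact hy h2
  exact this.trans (mul_le_mul_of_nonneg_left hmin hc)

lemma val_sum_ge {B c : ℤ} (hc : 0 ≤ c) {ι : Type*} {t : Finset ι} {f : ι → ℚ}
    (h : ∀ i ∈ t, f i ≠ 0 → B ≤ c * padicValRat 2 (f i)) :
    (∑ i ∈ t, f i) ≠ 0 → B ≤ c * padicValRat 2 (∑ i ∈ t, f i) := by
  classical
  induction t using Finset.induction_on with
  | empty => intro h0; simp at h0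
  | @insert a t ha ih =>
    rw [Finset.sum_insert ha]
    exact val_add_ge hc (h a (Finset.mem_insert_self a t))
      (ih fun i hi => h i (Finset.mem_insert_of_mem hi))

lemma pv_nat (k m : ℕ) (hm : ¬ 2 ∣ m) : padicValRat 2 (((2^k * m : ℕ)) : ℚ) = k := by
  have hm0 : m ≠ 0 := by rintro rfl; exact hm (dvd_zero 2)
  rw [← padicValRat_of_nat, padicValNat.mul (pow_ne_zero _ two_ne_zero) hm0,
    padicValNat.prime_pow, padicValNat.eq_zero_of_not_dvd hm]
  simp

lemma pv_oddnat (m : ℕ) (hm : ¬ 2 ∣ m) : padicValRat 2 ((m : ℚ)) = 0 := by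
  have := pv_nat 0 m hm
  simpa using this

def wtX (m : Fin 3 →₀ ℕ) : ℤ := (m 0 : ℤ) + m 1 + m 2
def wtY (m : Fin 3 →₀ ℕ) : ℤ := (m 0 : ℤ) + m 1 + 2 * m 2

lemma wtX_nonneg (m : Fin 3 →₀ ℕ) : 0 ≤ wtX m := by unfold wtX; positivity
lemma wtY_nonneg (m : Fin 3 →₀ ℕ) : 0 ≤ wtY m := by unfold wtY; positivity

lemma wtX_sub0 (m : Fin 3 →₀ ℕ) (h : m 0 ≠ 0) :
    wtX (m - Finsupp.single 0 1) = wtX m - 1 := by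
  simp [wtX, Finsupp.sub_apply, Finsupp.single_apply, Fin.ext_iff]; omega

lemma wtX_sub1 (m : Fin 3 →₀ ℕ) (h : m 1 ≠ 0) :
    wtX (m - Finsupp.single 1 1) = wtX m - 1 := by
  simp [wtX, Finsupp.sub_apply, Finsupp.single_apply, Fin.ext_iff]; omega

lemma wtY_sub0 (m : Fin 3 →₀ ℕ) (h : m 0 ≠ 0) :
    wtY (m - Finsupp.single 0 1) = wtY m - 1 := by
  simp [wtY, Finsupp.sub_apply, Finsupp.single_apply, Fin.ext_iff]; omega

lemma wtY_sub1 (m : Fin 3 →₀ ℕ) (h : m 1 ≠ 0) :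
    wtY (m - Finsupp.single 1 1) = wtY m - 1 := by
  simp [wtY, Finsupp.sub_apply, Finsupp.single_apply, Fin.ext_iff]; omega

lemma wtY_sub2 (m : Fin 3 →₀ ℕ) (h : m 2 ≠ 0) :
    wtY (m - Finsupp.single 2 1) = wtY m - 2 := by
  simp [wtY, Finsupp.sub_apply, Finsupp.single_apply, Fin.ext_iff]; omega

lemma pv120 : padicValRat 2 ((-1:ℚ)/120) = -3 := by
  rw [padicValRat.div (by norm_num) (by norm_num), padicValRat.neg, padicValRat.one,
    show ((120:ℚ)) = ((2^3*15 : ℕ) : ℚ) by norm_num, pv_nat 3 15 (by norm_num)]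
  norm_num

lemma pv1008 : padicValRat 2 ((-1:ℚ)/1008) = -4 := by
  rw [padicValRat.div (by norm_num) (by norm_num), padicValRat.neg, padicValRat.one,
    show ((1008:ℚ)) = ((2^4*63 : ℕ) : ℚ) by norm_num, pv_nat 4 63 (by norm_num)]
  norm_num

lemma pv32 : padicValRat 2 ((3:ℚ)/2) = -1 := by
  rw [padicValRat.div (by norm_num) (by norm_num),
    show ((3:ℚ)) = ((3 : ℕ) : ℚ) by norm_num, pv_oddnat 3 (by norm_num),
    show ((2:ℚ)) = ((2^1*1 : ℕ) : ℚ) by norm_num, pv_nat 1 1 (by norm_num)]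
  norm_num

lemma pv12 : padicValRat 2 ((1:ℚ)/2) = -1 := by
  rw [padicValRat.div (by norm_num) (by norm_num), padicValRat.one,
    show ((2:ℚ)) = ((2^1*1 : ℕ) : ℚ) by norm_num, pv_nat 1 1 (by norm_num)]
  norm_num

lemma pv_cast_succ (n : ℕ) : 0 ≤ padicValRat 2 ((n:ℚ)+1) := by
  rw [show ((n:ℚ)+1) = (((n+1:ℕ)):ℚ) by push_cast; ring]
  exact zero_le_padicValRat_of_nat _

lemma Hb : ∀ n : ℕ, ∀ m : Fin 3 →₀ ℕ, coeff m (opX^[n] 1) ≠ 0 →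
    3 * wtX m - 3 * n ≤ 2 * padicValRat 2 (coeff m (opX^[n] 1)) := by
  suffices h : ∀ n : ℕ, (∀ m : Fin 3 →₀ ℕ, coeff m (opX^[n] 1) ≠ 0 →
      3 * wtX m - 3 * n ≤ 2 * padicValRat 2 (coeff m (opX^[n] 1))) ∧
      (∀ m : Fin 3 →₀ ℕ, coeff m (opX^[n+1] 1) ≠ 0 →
      3 * wtX m - 3 * (n+1) ≤ 2 * padicValRat 2 (coeff m (opX^[n+1] 1))) by
    exact fun n => (h n).1
  intro n
  induction n with
  | zero =>
    constructor
    · intro m hm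
      rw [Function.iterate_zero_apply] at hm ⊢
      rw [coeff_one] at hm ⊢
      rcases eq_or_ne (0 : Fin 3 →₀ ℕ) m with h0 | h0
      · rw [if_pos h0] at hm ⊢
        rw [padicValRat.one, ← h0]
        simp [wtX]
      · rw [if_neg h0] at hm; exact absurd rfl hm
    · intro m hm
      rw [Function.iterate_one, opX_one, vX, coeff_add, coeff_X', coeff_X'] at hm ⊢
      have hne : (Finsupp.single (1:Fin 3) 1) ≠ (Finsupp.single (0:Fin 3) 1) := by
        intro hc
        have h0 := DFunLike.congr_fun hc 0
        simp [Finsupp.single_apply] at h0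
      rcases eq_or_ne (Finsupp.single (1 : Fin 3) 1) m with h1 | h1
      · rw [if_pos h1, if_neg (h1 ▸ (Ne.symm hne))] at hm ⊢
        rw [← h1]
        norm_num [padicValRat.one, wtX, Finsupp.single_apply, Fin.ext_iff]
      · rw [if_neg h1] at hm ⊢
        rcases eq_or_ne (Finsupp.single (0 : Fin 3) 1) m with h2 | h2
        · rw [if_pos h2] at hm ⊢
          rw [← h2]
          norm_num [padicValRat.one, wtX, Finsupp.single_apply, Fin.ext_iff]
        · rw [if_neg h2] at hm; simp at hm
  | succ n ih =>
    refine ⟨ih.2, ?_⟩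
    intro m
    rw [show n+1+1 = n+2 from rfl, H_rec n,
      show vX * opX^[n+1] 1 = X 1 * opX^[n+1] 1 + X 0 * opX^[n+1] 1 by
      rw [vX, add_mul], coeff_add, coeff_add, coeff_smul, smul_eq_mul]
    refine val_add_ge (by norm_num) (val_add_ge (by norm_num) ?_ ?_) ?_
    · intro hx
      rw [coeff_X_mul'] at hx ⊢
      by_cases h : (1 : Fin 3) ∈ m.support
      · rw [if_pos h] at hx ⊢
        have hb := ih.2 _ hx
        have hw := wtX_sub1 m (Finsupp.mem_support_iff.mp h)
        push_cast at hb ⊢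
        omega
      · rw [if_neg h] at hx; exact absurd rfl hx
    · intro hx
      rw [coeff_X_mul'] at hx ⊢
      by_cases h : (0 : Fin 3) ∈ m.support
      · rw [if_pos h] at hx ⊢
        have hb := ih.2 _ hx
        have hw := wtX_sub0 m (Finsupp.mem_support_iff.mp h)
        push_cast at hb ⊢
        omega
      · rw [if_neg h] at hx; exact absurd rfl hx
    · intro hz
      have ha : ((n:ℚ)+1) * (-1/120) ≠ 0 := by
        apply mul_ne_zero _ (by norm_num)
        positivity
      have hc : coeff m (opX^[n] 1) ≠ 0 := by
        intro h0; rw [h0, mul_zero] at hz; exact hz rfl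
      rw [padicValRat.mul ha hc, padicValRat.mul (by positivity) (by norm_num : (-1/120:ℚ) ≠ 0),
        pv120]
      have hb := ih.1 _ hc
      have hn := pv_cast_succ n
      push_cast at hb ⊢
      omega

lemma single_ne {i j : Fin 3} (h : i ≠ j) :
    (Finsupp.single i 1 : Fin 3 →₀ ℕ) ≠ Finsupp.single j 1 := by
  intro hc
  have h1 := DFunLike.congr_fun hc i
  rw [Finsupp.single_apply, Finsupp.single_apply, if_pos rfl, if_neg (Ne.symm h)] at h1
  exact one_ne_zero h1

lemma coeff_vY_mul (P : R3) (m : Fin 3 →₀ ℕ) : coeff m (vY * P) =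
    coeff m (X 2 * P) + (3:ℚ)/2 * coeff m (X 1 * P) + (1:ℚ)/2 * coeff m (X 0 * P) := by
  rw [vY, add_mul, add_mul, mul_assoc, mul_assoc, coeff_add, coeff_add, coeff_C_mul, coeff_C_mul]

lemma Kb : ∀ n : ℕ, ∀ m : Fin 3 →₀ ℕ, coeff m (opY^[n] 1) ≠ 0 →
    wtY m - 2 * n ≤ 1 * padicValRat 2 (coeff m (opY^[n] 1)) := by
  suffices h : ∀ n : ℕ, (∀ m : Fin 3 →₀ ℕ, coeff m (opY^[n] 1) ≠ 0 →
      wtY m - 2 * n ≤ 1 * padicValRat 2 (coeff m (opY^[n] 1))) ∧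
      (∀ m : Fin 3 →₀ ℕ, coeff m (opY^[n+1] 1) ≠ 0 →
      wtY m - 2 * (n+1) ≤ 1 * padicValRat 2 (coeff m (opY^[n+1] 1))) by
    exact fun n => (h n).1
  intro n
  induction n with
  | zero =>
    constructor
    · intro m hm
      rw [Function.iterate_zero_apply] at hm ⊢
      rw [coeff_one] at hm ⊢
      rcases eq_or_ne (0 : Fin 3 →₀ ℕ) m with h0 | h0
      · rw [if_pos h0] at hm ⊢
        rw [padicValRat.one, ← h0]
        simp [wtY]
      · rw [if_neg h0] at hm; exact absurd rfl hm
    · intro m hm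
      rw [Function.iterate_one, opY_one, vY, coeff_add, coeff_add, coeff_C_mul, coeff_C_mul,
        coeff_X', coeff_X', coeff_X'] at hm ⊢
      rcases eq_or_ne (Finsupp.single (2 : Fin 3) 1) m with h2 | h2
      · rw [if_pos h2, if_neg (h2 ▸ single_ne (by decide)),
          if_neg (h2 ▸ single_ne (by decide))] at hm ⊢
        rw [← h2]
        norm_num [padicValRat.one, wtY, Finsupp.single_apply, Fin.ext_iff]
      · rw [if_neg h2] at hm ⊢
        rcases eq_or_ne (Finsupp.single (1 : Fin 3) 1) m with h1 | h1
        · rw [if_pos h1, if_neg (h1 ▸ single_ne (by decide))] at hm ⊢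
          rw [← h1]
          rw [show (0:ℚ) + 3/2 * 1 + 1/2 * 0 = 3/2 by norm_num, pv32]
          norm_num [wtY, Finsupp.single_apply, Fin.ext_iff]
        · rw [if_neg h1] at hm ⊢
          rcases eq_or_ne (Finsupp.single (0 : Fin 3) 1) m with h0 | h0
          · rw [if_pos h0] at hm ⊢
            rw [← h0]
            rw [show (0:ℚ) + 3/2 * 0 + 1/2 * 1 = 1/2 by norm_num, pv12]
            norm_num [wtY, Finsupp.single_apply, Fin.ext_iff]
          · rw [if_neg h0] at hm; simp at hm
  | succ n ih =>
    refine ⟨ih.2, ?_⟩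
    intro m
    rw [show n+1+1 = n+2 from rfl, K_rec n, coeff_add, coeff_vY_mul, coeff_smul, smul_eq_mul]
    refine val_add_ge (by norm_num)
      (val_add_ge (by norm_num) (val_add_ge (by norm_num) ?_ ?_) ?_) ?_
    · intro hx
      rw [coeff_X_mul'] at hx ⊢
      by_cases h : (2 : Fin 3) ∈ m.support
      · rw [if_pos h] at hx ⊢
        have hb := ih.2 _ hx
        have hw := wtY_sub2 m (Finsupp.mem_support_iff.mp h)
        push_cast at hb ⊢
        omega
      · rw [if_neg h] at hx; exact absurd rfl hx
    · intro hx
      have hx2 : coeff m (X 1 * opY^[n+1] 1) ≠ 0 := by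
        intro h0; rw [h0, mul_zero] at hx; exact hx rfl
      rw [padicValRat.mul (by norm_num : (3/2:ℚ) ≠ 0) hx2, pv32]
      rw [coeff_X_mul'] at hx2 ⊢
      by_cases h : (1 : Fin 3) ∈ m.support
      · rw [if_pos h] at hx2 ⊢
        have hb := ih.2 _ hx2
        have hw := wtY_sub1 m (Finsupp.mem_support_iff.mp h)
        push_cast at hb ⊢
        omega
      · rw [if_neg h] at hx2; exact absurd rfl hx2
    · intro hx
      have hx2 : coeff m (X 0 * opY^[n+1] 1) ≠ 0 := by
        intro h0; rw [h0, mul_zero] at hx; exact hx rfl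
      rw [padicValRat.mul (by norm_num : (1/2:ℚ) ≠ 0) hx2, pv12]
      rw [coeff_X_mul'] at hx2 ⊢
      by_cases h : (0 : Fin 3) ∈ m.support
      · rw [if_pos h] at hx2 ⊢
        have hb := ih.2 _ hx2
        have hw := wtY_sub0 m (Finsupp.mem_support_iff.mp h)
        push_cast at hb ⊢
        omega
      · rw [if_neg h] at hx2; exact absurd rfl hx2
    · intro hz
      have ha : ((n:ℚ)+1) * (-1/1008) ≠ 0 := by
        apply mul_ne_zero _ (by norm_num)
        positivity
      have hc : coeff m (opY^[n] 1) ≠ 0 := by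
        intro h0; rw [h0, mul_zero] at hz; exact hz rfl
      rw [padicValRat.mul ha hc, padicValRat.mul (by positivity) (by norm_num : (-1/1008:ℚ) ≠ 0),
        pv1008]
      have hb := ih.1 _ hc
      have hn := pv_cast_succ n
      push_cast at hb ⊢
      omega

lemma dfac_succ (r : ℕ) : (2*(r+1)-1)‼ = (2*r+1) * (2*r-1)‼ := by
  cases r with
  | zero => simp [Nat.doubleFactorial]
  | succ k =>
    rw [show 2*(k+1+1)-1 = (2*k+1)+2 by omega, Nat.doubleFactorial_add_two,
      show 2*(k+1)-1 = 2*k+1 by omega]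
    ring

lemma dfac_odd (r : ℕ) : ¬ 2 ∣ (2*r-1)‼ := by
  induction r with
  | zero => simp [Nat.doubleFactorial]
  | succ k ih =>
    rw [dfac_succ]
    rw [Nat.Prime.dvd_mul Nat.prime_two]
    rintro (h | h)
    · omega
    · exact ih h

lemma coeff0_X_mul (i : Fin 3) (P : R3) : coeff 0 (X i * P) = 0 := by
  rw [coeff_X_mul']; simp

lemma Hc0 : ∀ r : ℕ, coeff 0 (opX^[2*r] 1) = ((2*r-1)‼ : ℚ) * (-1/120)^r := by
  intro r
  induction r with
  | zero => simp [Nat.doubleFactorial]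
  | succ r ih =>
    rw [show 2*(r+1) = 2*r+2 by ring, H_rec (2*r), coeff_add, coeff_smul, smul_eq_mul,
      show vX * opX^[2*r+1] 1 = X 1 * opX^[2*r+1] 1 + X 0 * opX^[2*r+1] 1 by rw [vX, add_mul],
      coeff_add, coeff0_X_mul, coeff0_X_mul, ih]
    have hd : ((2*r+2-1)‼ : ℚ) = ((2*r+1 : ℕ) : ℚ) * ((2*r-1)‼ : ℚ) := by
      rw [show 2*r+2-1 = 2*(r+1)-1 by omega, dfac_succ]; push_cast; ring
    rw [hd]; push_cast; ring

lemma Kc0 : ∀ s : ℕ, coeff 0 (opY^[2*s] 1) = ((2*s-1)‼ : ℚ) * (-1/1008)^s := by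
  intro s
  induction s with
  | zero => simp [Nat.doubleFactorial]
  | succ s ih =>
    rw [show 2*(s+1) = 2*s+2 by ring, K_rec (2*s), coeff_add, coeff_smul, smul_eq_mul,
      coeff_vY_mul, coeff0_X_mul, coeff0_X_mul, coeff0_X_mul, ih]
    have hd : ((2*s+2-1)‼ : ℚ) = ((2*s+1 : ℕ) : ℚ) * ((2*s-1)‼ : ℚ) := by
      rw [show 2*s+2-1 = 2*(s+1)-1 by omega, dfac_succ]; push_cast; ring
    rw [hd]; push_cast; ring

/-- `α_r = ((−1)^r / (2^r (2r−1)‼))·X^{2r}·1`. -/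
noncomputable def alpha (r : ℕ) : MvPolynomial (Fin 3) ℚ :=
  (((-1 : ℚ) ^ r) / (2 ^ r * ((2 * r - 1)‼ : ℚ))) • opX^[2 * r] 1

/-- `β_s = (2^s / (2s−1)‼)·Y^{2s}·1`. -/
noncomputable def betaPoly (s : ℕ) : MvPolynomial (Fin 3) ℚ :=
  ((2 ^ s : ℚ) / ((2 * s - 1)‼ : ℚ)) • opY^[2 * s] 1

lemma dfac_cast_ne (r : ℕ) : ((2*r-1)‼ : ℚ) ≠ 0 := by
  exact_mod_cast (Nat.doubleFactorial_pos _).ne'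

lemma pv_dfac (r : ℕ) : padicValRat 2 (((2*r-1)‼ : ℚ)) = 0 := pv_oddnat _ (dfac_odd r)

lemma pv_two_pow (r : ℕ) : padicValRat 2 ((2:ℚ)^r) = r := by
  rw [show ((2:ℚ)^r) = (((2^r*1 : ℕ)):ℚ) by push_cast; ring, pv_nat r 1 (by norm_num)]

lemma pv_neg_one_pow (r : ℕ) : padicValRat 2 ((-1:ℚ)^r) = 0 := by
  rw [padicValRat.pow (-1:ℚ), show padicValRat 2 (-1:ℚ) = 0 by
    rw [show (-1:ℚ) = -(1:ℚ) from rfl, padicValRat.neg, padicValRat.one], mul_zero]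

lemma scalX_ne (r : ℕ) : ((-1 : ℚ) ^ r) / (2 ^ r * ((2 * r - 1)‼ : ℚ)) ≠ 0 := by
  apply div_ne_zero
  · exact pow_ne_zero _ (by norm_num)
  · exact mul_ne_zero (pow_ne_zero _ (by norm_num)) (dfac_cast_ne r)

lemma pv_scalX (r : ℕ) :
    padicValRat 2 (((-1 : ℚ) ^ r) / (2 ^ r * ((2 * r - 1)‼ : ℚ))) = -(r:ℤ) := by
  rw [padicValRat.div (pow_ne_zero _ (by norm_num))
      (mul_ne_zero (pow_ne_zero _ (by norm_num)) (dfac_cast_ne r)),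
    padicValRat.mul (pow_ne_zero _ (by norm_num)) (dfac_cast_ne r),
    pv_neg_one_pow, pv_two_pow, pv_dfac]
  ring

lemma scalY_ne (s : ℕ) : ((2 ^ s : ℚ) / ((2 * s - 1)‼ : ℚ)) ≠ 0 := by
  apply div_ne_zero (pow_ne_zero _ (by norm_num)) (dfac_cast_ne s)

lemma pv_scalY (s : ℕ) :
    padicValRat 2 ((2 ^ s : ℚ) / ((2 * s - 1)‼ : ℚ)) = (s:ℤ) := by
  rw [padicValRat.div (pow_ne_zero _ (by norm_num)) (dfac_cast_ne s), pv_two_pow, pv_dfac]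
  ring

lemma alphaAll (r : ℕ) (m : Fin 3 →₀ ℕ) (hm : coeff m (alpha r) ≠ 0) :
    -(4*(r:ℤ)) ≤ padicValRat 2 (coeff m (alpha r)) := by
  rw [alpha, coeff_smul, smul_eq_mul] at hm ⊢
  have hc : coeff m (opX^[2*r] 1) ≠ 0 := by
    intro h0; rw [h0, mul_zero] at hm; exact hm rfl
  rw [padicValRat.mul (scalX_ne r) hc, pv_scalX]
  have hb := Hb (2*r) m hc
  have hw := wtX_nonneg m
  push_cast at hb ⊢
  omega

lemma betaAll (s : ℕ) (m : Fin 3 →₀ ℕ) (hm : coeff m (betaPoly s) ≠ 0) :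
    -(3*(s:ℤ)) ≤ padicValRat 2 (coeff m (betaPoly s)) := by
  rw [betaPoly, coeff_smul, smul_eq_mul] at hm ⊢
  have hc : coeff m (opY^[2*s] 1) ≠ 0 := by
    intro h0; rw [h0, mul_zero] at hm; exact hm rfl
  rw [padicValRat.mul (scalY_ne s) hc, pv_scalY]
  have hb := Kb (2*s) m hc
  have hw := wtY_nonneg m
  push_cast at hb ⊢
  omega

lemma alpha_c0 (r : ℕ) : coeff 0 (alpha r) = ((1:ℚ)/240)^r := by
  rw [alpha, coeff_smul, smul_eq_mul, Hc0]
  have hdf := dfac_cast_ne r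
  have key : ((-1:ℚ))^r * ((-1:ℚ)/120)^r = ((1:ℚ)/240)^r * 2^r := by
    rw [← mul_pow, ← mul_pow]; norm_num
  rw [div_mul_eq_mul_div, div_eq_iff (mul_ne_zero (pow_ne_zero _ (by norm_num : (2:ℚ) ≠ 0)) hdf)]
  linear_combination (((2*r-1)‼ : ℚ)) * key

lemma beta_c0 (s : ℕ) : coeff 0 (betaPoly s) = ((-1:ℚ)/504)^s := by
  rw [betaPoly, coeff_smul, smul_eq_mul, Kc0]
  have hdf := dfac_cast_ne s
  have key : ((2:ℚ))^s * ((-1:ℚ)/1008)^s = ((-1:ℚ)/504)^s := by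
    rw [← mul_pow]; norm_num
  rw [div_mul_eq_mul_div, div_eq_iff hdf]
  linear_combination (((2*s-1)‼ : ℚ)) * key

lemma pv240 : padicValRat 2 ((1:ℚ)/240) = -4 := by
  rw [padicValRat.div (by norm_num) (by norm_num), padicValRat.one,
    show ((240:ℚ)) = ((2^4*15 : ℕ) : ℚ) by norm_num, pv_nat 4 15 (by norm_num)]
  norm_num

lemma pv504 : padicValRat 2 ((-1:ℚ)/504) = -3 := by
  rw [padicValRat.div (by norm_num) (by norm_num), padicValRat.neg, padicValRat.one,
    show ((504:ℚ)) = ((2^3*63 : ℕ) : ℚ) by norm_num, pv_nat 3 63 (by norm_num)]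
  norm_num

/-- The 2-adic sup-norm valuation of a polynomial: minimum of the 2-adic valuations of
its coefficients (`⊤` for the zero polynomial). -/
noncomputable def nu2 (P : MvPolynomial (Fin 3) ℚ) : WithTop ℤ :=
  P.support.inf fun d => ((padicValRat 2 (P.coeff d) : ℤ) : WithTop ℤ)

/-- for all `r, s ≥ 2`, `ν₂(α_r · β_s) = −4r − 3s`. -/
theorem stmt15 (r s : ℕ) (hr : 2 ≤ r) (hs : 2 ≤ s) :
    nu2 (alpha r * betaPoly s) = ((-4 * (r : ℤ) - 3 * (s : ℤ) : ℤ) : WithTop ℤ) := by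
  set P := alpha r * betaPoly s with hP
  have hc0 : coeff 0 P = ((1:ℚ)/240)^r * ((-1:ℚ)/504)^s := by
    have h1 : coeff 0 P = constantCoeff P := rfl
    rw [h1, hP, map_mul,
      show constantCoeff (alpha r) = coeff 0 (alpha r) from rfl,
      show constantCoeff (betaPoly s) = coeff 0 (betaPoly s) from rfl, alpha_c0, beta_c0]
  have hne : coeff 0 P ≠ 0 := by
    rw [hc0]
    exact mul_ne_zero (pow_ne_zero _ (by norm_num)) (pow_ne_zero _ (by norm_num))
  have hv0 : padicValRat 2 (coeff 0 P) = -4*(r:ℤ) - 3*(s:ℤ) := by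
    rw [hc0, padicValRat.mul (pow_ne_zero _ (by norm_num)) (pow_ne_zero _ (by norm_num)),
      padicValRat.pow ((1:ℚ)/240),
      padicValRat.pow ((-1:ℚ)/504), pv240, pv504]
    ring
  have hall : ∀ m : Fin 3 →₀ ℕ, coeff m P ≠ 0 →
      -4*(r:ℤ) - 3*(s:ℤ) ≤ padicValRat 2 (coeff m P) := by
    intro m hm
    rw [hP, coeff_mul] at hm ⊢
    have key := val_sum_ge (B := -4*(r:ℤ) - 3*(s:ℤ)) (c := 1) (by norm_num) ?_ hm
    · rw [one_mul] at key; exact key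
    · intro p _ hne'
      have h1 : coeff p.1 (alpha r) ≠ 0 := left_ne_zero_of_mul hne'
      have h2 : coeff p.2 (betaPoly s) ≠ 0 := right_ne_zero_of_mul hne'
      rw [one_mul, padicValRat.mul h1 h2]
      have ha := alphaAll r p.1 h1
      have hb := betaAll s p.2 h2
      omega
  show P.support.inf (fun d => ((padicValRat 2 (P.coeff d) : ℤ) : WithTop ℤ)) = _
  apply le_antisymm
  · have hmem : 0 ∈ P.support := mem_support_iff.mpr hne
    calc P.support.inf (fun d => ((padicValRat 2 (P.coeff d) : ℤ) : WithTop ℤ))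
        ≤ ((padicValRat 2 (P.coeff 0) : ℤ) : WithTop ℤ) := Finset.inf_le hmem
      _ = _ := by rw [show P.coeff 0 = coeff 0 P from rfl, hv0]
  · apply Finset.le_inf
    intro m hm
    have hb := hall m (mem_support_iff.mp hm)
    rw [show ((-4 * (r : ℤ) - 3 * (s : ℤ) : ℤ)) = -4*(r:ℤ) - 3*(s:ℤ) by ring]
    exact_mod_cast hb
end

section
/- For all integers r ≥ 1, applying the formula of Lemma (alpha formula): ((−1)^r/(2^r(2r−1)!!))·(x − (1/120)∂ₓ)^{2r}·1 evaluated in ℚ[x] equals ((−1)^r/(2^r(2r−1)!!))·∑_{l=0}^{r} C(2r, 2l)·(2l)!/((−240)^l·l!)·x^{2(r−l)}, and the constant term (coefficient of x⁰) of this polynomial equals ((−1)^r/(2^r(2r−1)!!))·(2r)!/((−240)^r·r!) = (2r)!/(480^r·r!·(2r−1)!!). -/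
open Polynomial Nat

/-- The operator `T = x − (1/120)∂ₓ` on `ℚ[x]`. -/
noncomputable def hermOp (P : Polynomial ℚ) : Polynomial ℚ :=
  X * P - ((1 : ℚ)/120) • derivative P

namespace Stmt19Aux

/-- Coefficients of the Hermite-like polynomial. -/
noncomputable def c (n l : ℕ) : ℚ :=
  if 2 * l ≤ n then
    (n.factorial : ℚ) / (((n - 2*l).factorial : ℚ) * (l.factorial : ℚ)) * (-1/240)^l
  else 0

noncomputable def Q (n : ℕ) : Polynomial ℚ :=
  ∑ l ∈ Finset.range (n+1), C (c n l) * X ^ (n - 2*l)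

lemma c_zero {n l : ℕ} (h : n < 2*l) : c n l = 0 := by
  rw [c, if_neg (by omega)]

lemma c_zero' (n : ℕ) : c n 0 = 1 := by
  rw [c, if_pos (by omega)]
  simp [Nat.factorial_ne_zero]

lemma fact_cast_ne (n : ℕ) : ((n.factorial : ℚ)) ≠ 0 :=
  Nat.cast_ne_zero.mpr (Nat.factorial_ne_zero n)

lemma c_rec (n l : ℕ) :
    c (n+1) (l+1) = c n (l+1) - ((n - 2*l : ℕ) : ℚ)/120 * c n l := by
  rcases Nat.lt_or_ge n (2*l+2) with hc | hc
  · -- n ≤ 2l+1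
    rcases Nat.lt_or_ge n (2*l+1) with hc2 | hc2
    · -- n ≤ 2l
      rw [c, if_neg (by omega), c, if_neg (by omega)]
      rcases Nat.lt_or_ge n (2*l) with hc3 | hc3
      · rw [c_zero hc3]; ring
      · have : n = 2*l := by omega
        subst this
        simp
    · -- n = 2l+1
      have : n = 2*l+1 := by omega
      subst this
      rw [c, if_pos (by omega), c, if_neg (by omega), c, if_pos (by omega)]
      have e1 : 2*l+1+1 - 2*(l+1) = 0 := by omega
      have e2 : 2*l+1 - 2*l = 1 := by omega
      rw [e1, e2]
      have f1 : ((2*l+1+1).factorial : ℚ) = (2*l+2) * ((2*l+1).factorial : ℚ) := by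
        rw [show 2*l+1+1 = (2*l+1)+1 from rfl, Nat.factorial_succ]; push_cast; ring
      have f2 : ((l+1).factorial : ℚ) = (l+1) * (l.factorial : ℚ) := by
        rw [Nat.factorial_succ]; push_cast; ring
      rw [f1, f2]
      have h1 := fact_cast_ne (2*l+1)
      have h2 := fact_cast_ne l
      have h3 : ((l:ℚ)+1) ≠ 0 := by positivity
      field_simp
      ring
  · -- 2l+2 ≤ n
    obtain ⟨m, rfl⟩ : ∃ m, n = m + 2*l + 2 := ⟨n - (2*l+2), by omega⟩
    rw [c, if_pos (by omega), c, if_pos (by omega), c, if_pos (by omega)]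
    have e1 : m + 2*l + 2 + 1 - 2*(l+1) = m+1 := by omega
    have e2 : m + 2*l + 2 - 2*(l+1) = m := by omega
    have e3 : m + 2*l + 2 - 2*l = m+2 := by omega
    rw [e1, e2, e3]
    have f1 : ((m+2*l+2+1).factorial : ℚ) = (m+2*l+3) * ((m+2*l+2).factorial : ℚ) := by
      rw [show m+2*l+2+1 = (m+2*l+2)+1 from rfl, Nat.factorial_succ]; push_cast; ring
    have f2 : ((m+1).factorial : ℚ) = (m+1) * (m.factorial : ℚ) := by
      rw [Nat.factorial_succ]; push_cast; ring
    have f3 : ((m+2).factorial : ℚ) = (m+2) * ((m+1) * (m.factorial : ℚ)) := by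
      rw [show m+2 = (m+1)+1 from rfl, Nat.factorial_succ, ← f2]; push_cast; ring
    have f4 : ((l+1).factorial : ℚ) = (l+1) * (l.factorial : ℚ) := by
      rw [Nat.factorial_succ]; push_cast; ring
    rw [f1, f2, f3, f4]
    have h1 := fact_cast_ne (m+2*l+2)
    have h2 := fact_cast_ne m
    have h3 := fact_cast_ne l
    have h4 := fact_cast_ne (l+1)
    have h5 : ((m:ℚ)+1) ≠ 0 := by positivity
    have h6 : ((m:ℚ)+2) ≠ 0 := by positivity
    have h7 : ((l:ℚ)+1) ≠ 0 := by positivity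
    field_simp
    push_cast; ring

lemma step (n : ℕ) : hermOp (Q n) = Q (n+1) := by
  have hA : (∑ l ∈ Finset.range (n+1), X * (C (c n l) * X ^ (n - 2*l)))
      = ∑ l ∈ Finset.range (n+2), C (c n l) * X ^ (n+1 - 2*l) := by
    rw [Finset.sum_range_succ (fun l => C (c n l) * X ^ (n+1 - 2*l)) (n+1)]
    rw [c_zero (show n < 2*(n+1) by omega)]
    simp only [map_zero, zero_mul, add_zero]
    refine Finset.sum_congr rfl fun l hl => ?_
    by_cases h : 2*l ≤ n
    · rw [show n+1-2*l = (n-2*l)+1 by omega]; ring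
    · rw [c_zero (show n < 2*l by omega)]; simp
  have hB : (∑ l ∈ Finset.range (n+1),
        (1/120 : ℚ) • derivative (C (c n l) * X ^ (n - 2*l)))
      = ∑ l ∈ Finset.range (n+1),
        C (((n - 2*l : ℕ) : ℚ)/120 * c n l) * X ^ (n+1 - 2*(l+1)) := by
    refine Finset.sum_congr rfl fun l hl => ?_
    rw [derivative_C_mul, derivative_X_pow, smul_eq_C_mul]
    rw [show n + 1 - 2*(l+1) = n - 2*l - 1 by omega]
    rw [show (((n - 2*l : ℕ) : ℚ)/120 * c n l) = 1/120 * (c n l * ((n - 2*l : ℕ) : ℚ)) by ring]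
    rw [C_mul, C_mul]
    ring
  rw [hermOp, Q, Q, Finset.mul_sum, derivative_sum, Finset.smul_sum, hA, hB]
  rw [Finset.sum_range_succ' (fun l => C (c n l) * X ^ (n+1 - 2*l)) (n+1)]
  rw [Finset.sum_range_succ' (fun l => C (c (n+1) l) * X ^ (n+1 - 2*l)) (n+1)]
  rw [add_sub_right_comm, ← Finset.sum_sub_distrib]
  congr 1
  · refine Finset.sum_congr rfl fun l hl => ?_
    rw [c_rec n l, C_sub]
    ring
  · rw [c_zero' n, c_zero' (n+1)]

lemma iter (n : ℕ) : hermOp^[n] 1 = Q n := by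
  induction n with
  | zero => simp [Q, c_zero']
  | succ n ih => rw [Function.iterate_succ_apply', ih, step]

end Stmt19Aux

/-- for `r ≥ 1`,
(1) `T^{2r}(1) = ∑_{l=0}^{r} C(2r,2l)·(2l)!/((−240)^l·l!)·x^{2(r−l)}`, and
(2) the constant coefficient of `α_r = ((−1)^r/(2^r(2r−1)‼))·T^{2r}(1)` equals
`(2r)!/(480^r·r!·(2r−1)‼)`. -/
theorem stmt19 (r : ℕ) (hr : 1 ≤ r) :
    hermOp^[2 * r] 1 =
      (∑ l ∈ Finset.range (r + 1),
        C (((2 * r).choose (2 * l) : ℚ) * ((2 * l).factorial : ℚ)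
            / ((-240 : ℚ) ^ l * (l.factorial : ℚ))) * X ^ (2 * (r - l))) ∧
    ((((-1 : ℚ) ^ r / (2 ^ r * (((2 * r - 1)‼ : ℕ) : ℚ))) • hermOp^[2 * r] 1).coeff 0
      = ((2 * r).factorial : ℚ) / (480 ^ r * (r.factorial : ℚ) * (((2 * r - 1)‼ : ℕ) : ℚ))) := by
  have hpow : ∀ l : ℕ, ((-240 : ℚ)) ^ l = (-1)^l * 240^l := by
    intro l; rw [show (-240:ℚ) = (-1) * 240 by norm_num, mul_pow]
  have hpne : ∀ l : ℕ, ((-240 : ℚ)) ^ l ≠ 0 := fun l => pow_ne_zero l (by norm_num)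
  have h1 : hermOp^[2 * r] 1 =
      (∑ l ∈ Finset.range (r + 1),
        C (((2 * r).choose (2 * l) : ℚ) * ((2 * l).factorial : ℚ)
            / ((-240 : ℚ) ^ l * (l.factorial : ℚ))) * X ^ (2 * (r - l))) := by
    rw [Stmt19Aux.iter, Stmt19Aux.Q]
    rw [← Finset.sum_subset (Finset.range_subset_range.mpr (by omega) :
          Finset.range (r+1) ⊆ Finset.range (2*r+1))
        (fun l hl hl2 => by
          rw [Stmt19Aux.c_zero (show 2*r < 2*l by
            simp only [Finset.mem_range] at hl hl2; omega)]
          simp)]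
    refine Finset.sum_congr rfl fun l hl => ?_
    simp only [Finset.mem_range] at hl
    have hll : 2*l ≤ 2*r := by omega
    have hrl : 2*r - 2*l = 2*(r-l) := by omega
    rw [Stmt19Aux.c, if_pos hll, hrl]
    congr 1
    refine congrArg C ?_
    have hc : (((2*r).choose (2*l) : ℚ)) * ((2*l).factorial : ℚ) * ((2*(r-l)).factorial : ℚ)
        = ((2*r).factorial : ℚ) := by
      rw [← hrl]
      exact_mod_cast congrArg (Nat.cast : ℕ → ℚ)
        (Nat.choose_mul_factorial_mul_factorial hll)
    have h1 := Stmt19Aux.fact_cast_ne (2*(r-l))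
    have h2 := Stmt19Aux.fact_cast_ne l
    have h3 := hpne l
    rw [show (-1/240 : ℚ) = (-240 : ℚ)⁻¹ by norm_num, inv_pow]
    field_simp
    linear_combination (-1 : ℚ) * hc
  refine ⟨h1, ?_⟩
  rw [h1, coeff_smul, finset_sum_coeff, smul_eq_mul]
  rw [Finset.sum_eq_single r
      (fun l hl hlr => by
        simp only [Finset.mem_range] at hl
        rw [coeff_C_mul, coeff_X_pow, if_neg (by omega)]
        simp)
      (fun h => absurd (Finset.self_mem_range_succ r) h)]
  rw [coeff_C_mul, coeff_X_pow, Nat.sub_self, mul_zero, if_pos rfl, mul_one]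
  have hDpos : 0 < (2*r-1)‼ := by positivity
  have hD : (((2 * r - 1)‼ : ℕ) : ℚ) ≠ 0 := Nat.cast_ne_zero.mpr hDpos.ne'
  rw [Nat.choose_self, Nat.cast_one, one_mul, hpow r,
    show (480:ℚ)^r = 2^r * 240^r by rw [← mul_pow]; norm_num]
  have hm : ((-1:ℚ))^r * (-1)^r = 1 := by rw [← mul_pow]; norm_num
  have h2r : ((2:ℚ))^r ≠ 0 := by positivity
  have h240 : ((240:ℚ))^r ≠ 0 := by positivity
  have hrf := Stmt19Aux.fact_cast_ne r
  have hneg : ((-1:ℚ))^r ≠ 0 := by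
    intro h; rw [h, zero_mul] at hm; exact zero_ne_one hm
  field_simp
end
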